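/- Under the paper's Assumption 2—there exists β ∈ (0,1) such that for all states s, s', actions a, and all transition kernels p in the uncertainty set, γ·p_{s,a}(s') ≤ β·p°_{s,a}(s')—the robust Bellman operator (T^π V)(s) = ∑_a π(a|s)[r(s,a) + inf_{p ∈ P_{s,a}} γ pᵀV] is a β-contraction in the sup norm on functions V : S → ℝ for finite S. -/
import Mathlib

lemma robust_aux {S : Type*} [Fintype S] (γ β : ℝ) (hγ0 : 0 < γ) (hβ0 : 0 < β)
    (Psa : Set (S → ℝ)) (p0sa : S → ℝ) (hmem : p0sa ∈ Psa)
    (hprob : ∀ p ∈ Psa, (∀ s', 0 ≤ p s') ∧ ∑ s', p s' = 1)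
    (hA2 : ∀ s', ∀ p ∈ Psa, γ * p s' ≤ β * p0sa s')
    (W W' : S → ℝ) (M : ℝ) (hM0 : 0 ≤ M) (hMle : ∀ s', |W s' - W' s'| ≤ M) :
    (⨅ p ∈ Psa, γ * ∑ s', p s' * W s') ≤ (⨅ p ∈ Psa, γ * ∑ s', p s' * W' s') + β * M := by
  have hp0sum : ∑ s', p0sa s' = 1 := (hprob _ hmem).2
  -- pointwise bound
  have hpt : ∀ p ∈ Psa, γ * ∑ s', p s' * W s' ≤ (γ * ∑ s', p s' * W' s') + β * M := by
    intro p hp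
    have h1 : γ * ∑ s', p s' * W s' - γ * ∑ s', p s' * W' s'
        = ∑ s', γ * p s' * (W s' - W' s') := by
      rw [← mul_sub, ← Finset.sum_sub_distrib]
      rw [Finset.mul_sum]
      congr 1; ext s'; ring
    have h2 : ∑ s', γ * p s' * (W s' - W' s') ≤ β * M := by
      calc ∑ s', γ * p s' * (W s' - W' s')
          ≤ ∑ s', β * p0sa s' * M := by
            apply Finset.sum_le_sum
            intro s' _
            have h3 : γ * p s' * (W s' - W' s') ≤ γ * p s' * |W s' - W' s'| := by
              apply mul_le_mul_of_nonneg_left (le_abs_self _)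
              exact mul_nonneg hγ0.le ((hprob p hp).1 s')
            refine h3.trans ?_
            have h4 : γ * p s' ≤ β * p0sa s' := hA2 s' p hp
            have h5 : |W s' - W' s'| ≤ M := hMle s'
            have := mul_le_mul h4 h5 (abs_nonneg _)
              (le_trans (mul_nonneg hγ0.le ((hprob p hp).1 s')) h4)
            exact this
        _ = β * M := by rw [← Finset.sum_mul, ← Finset.mul_sum, hp0sum, mul_one]
    linarith [h1 ▸ h2]
  -- boundedness below
  have hubW : ∀ p ∈ Psa, |γ * ∑ s', p s' * W s'| ≤ β * ∑ s', |W s'| := by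
    intro p hp
    calc |γ * ∑ s', p s' * W s'| = γ * |∑ s', p s' * W s'| := by
          rw [abs_mul, abs_of_nonneg hγ0.le]
      _ ≤ γ * ∑ s', |p s' * W s'| :=
          mul_le_mul_of_nonneg_left (Finset.abs_sum_le_sum_abs _ _) hγ0.le
      _ = ∑ s', γ * p s' * |W s'| := by
          rw [Finset.mul_sum]
          refine Finset.sum_congr rfl fun s' _ => ?_
          rw [abs_mul, abs_of_nonneg ((hprob p hp).1 s')]; ring
      _ ≤ ∑ s', β * p0sa s' * |W s'| :=
          Finset.sum_le_sum fun s' _ =>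
            mul_le_mul_of_nonneg_right (hA2 s' p hp) (abs_nonneg _)
      _ ≤ ∑ s', β * 1 * |W s'| := by
          refine Finset.sum_le_sum fun s' _ => ?_
          have h1 : p0sa s' ≤ 1 := by
            rw [← hp0sum]
            exact Finset.single_le_sum (fun i _ => (hprob _ hmem).1 i) (Finset.mem_univ s')
          gcongr
      _ = β * ∑ s', |W s'| := by
          rw [Finset.mul_sum]
          exact Finset.sum_congr rfl fun s' _ => by ring
  have hbdd : BddBelow (Set.range fun p => ⨅ _ : p ∈ Psa, γ * ∑ s', p s' * W s') := by
    refine ⟨min (-(β * ∑ s', |W s'|)) 0, ?_⟩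
    rintro x ⟨p, rfl⟩
    dsimp only
    by_cases hp : p ∈ Psa
    · rw [ciInf_pos hp]
      exact (min_le_left _ _).trans (neg_le.mp ((neg_le_abs _).trans (hubW p hp)))
    · haveI : IsEmpty (p ∈ Psa : Prop) := ⟨hp⟩
      rw [Real.iInf_of_isEmpty]
      exact min_le_right _ _
  rw [← sub_le_iff_le_add]
  apply le_ciInf
  intro p
  by_cases hp : p ∈ Psa
  · rw [ciInf_pos hp, sub_le_iff_le_add]
    calc (⨅ p ∈ Psa, γ * ∑ s', p s' * W s') ≤ ⨅ _ : p ∈ Psa, γ * ∑ s', p s' * W s' :=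
          ciInf_le hbdd p
      _ = γ * ∑ s', p s' * W s' := ciInf_pos hp
      _ ≤ (γ * ∑ s', p s' * W' s') + β * M := hpt p hp
  · haveI : IsEmpty (p ∈ Psa : Prop) := ⟨hp⟩
    rw [show (⨅ _ : p ∈ Psa, γ * ∑ s', p s' * W' s') = 0 from Real.iInf_of_isEmpty _,
      sub_le_iff_le_add, zero_add]
    calc (⨅ p ∈ Psa, γ * ∑ s', p s' * W s') ≤ ⨅ _ : p ∈ Psa, γ * ∑ s', p s' * W s' :=
          ciInf_le hbdd p
      _ = 0 := Real.iInf_of_isEmpty _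
      _ ≤ β * M := mul_nonneg hβ0.le hM0

/-- Under Assumption 2 (γ·p ≤ β·p° pointwise over the uncertainty set),
the robust Bellman operator is a β-contraction in the sup norm. -/
theorem robust_bellman_beta_contraction
    {S A : Type*} [Fintype S] [Fintype A] [Nonempty S]
    (γ β : ℝ) (hγ : γ ∈ Set.Ioo (0 : ℝ) 1) (hβ : β ∈ Set.Ioo (0 : ℝ) 1)
    (P : S → A → Set (S → ℝ)) (p0 : S → A → S → ℝ)
    (hp0_mem : ∀ s a, p0 s a ∈ P s a)
    (hprob : ∀ s a, ∀ p ∈ P s a, (∀ s', 0 ≤ p s') ∧ ∑ s', p s' = 1)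
    (hA2 : ∀ s a s', ∀ p ∈ P s a, γ * p s' ≤ β * p0 s a s')
    (π : S → A → ℝ) (hπ_nonneg : ∀ s a, 0 ≤ π s a) (hπ_sum : ∀ s, ∑ a, π s a = 1)
    (r : S × A → ℝ)
    (T : (S → ℝ) → (S → ℝ))
    (hT : ∀ V s, T V s =
      ∑ a, π s a * (r (s, a) + ⨅ p ∈ P s a, γ * ∑ s', p s' * V s'))
    (V V' : S → ℝ) :
    ⨆ s, |T V s - T V' s| ≤ β * ⨆ s, |V s - V' s| := by
  obtain ⟨hγ0, hγ1⟩ := hγ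
  obtain ⟨hβ0, hβ1⟩ := hβ
  set M := ⨆ s, |V s - V' s| with hMdef
  have hba : BddAbove (Set.range fun s => |V s - V' s|) := (Set.finite_range _).bddAbove
  have hMle : ∀ s, |V s - V' s| ≤ M := fun s => le_ciSup hba s
  have hM0 : 0 ≤ M := (abs_nonneg _).trans (hMle (Classical.arbitrary S))
  have key : ∀ s a,
      |(⨅ p ∈ P s a, γ * ∑ s', p s' * V s') - ⨅ p ∈ P s a, γ * ∑ s', p s' * V' s'| ≤ β * M := by
    intro s a
    rw [abs_sub_le_iff]
    constructor
    · linarith [robust_aux γ β hγ0 hβ0 (P s a) (p0 s a) (hp0_mem s a) (hprob s a)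
        (fun s' => hA2 s a s') V V' M hM0 hMle]
    · linarith [robust_aux γ β hγ0 hβ0 (P s a) (p0 s a) (hp0_mem s a) (hprob s a)
        (fun s' => hA2 s a s') V' V M hM0 (fun s' => by rw [abs_sub_comm]; exact hMle s')]
  apply ciSup_le
  intro s
  rw [hT, hT, ← Finset.sum_sub_distrib]
  calc |∑ a, (π s a * (r (s, a) + ⨅ p ∈ P s a, γ * ∑ s', p s' * V s')
          - π s a * (r (s, a) + ⨅ p ∈ P s a, γ * ∑ s', p s' * V' s'))|
      ≤ ∑ a, |π s a * (r (s, a) + ⨅ p ∈ P s a, γ * ∑ s', p s' * V s')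
          - π s a * (r (s, a) + ⨅ p ∈ P s a, γ * ∑ s', p s' * V' s')| :=
        Finset.abs_sum_le_sum_abs _ _
    _ ≤ ∑ a, π s a * (β * M) := by
        refine Finset.sum_le_sum fun a _ => ?_
        have h1 : π s a * (r (s, a) + ⨅ p ∈ P s a, γ * ∑ s', p s' * V s')
            - π s a * (r (s, a) + ⨅ p ∈ P s a, γ * ∑ s', p s' * V' s')
            = π s a * ((⨅ p ∈ P s a, γ * ∑ s', p s' * V s')
              - ⨅ p ∈ P s a, γ * ∑ s', p s' * V' s') := by ring
        rw [h1, abs_mul, abs_of_nonneg (hπ_nonneg s a)]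
        exact mul_le_mul_of_nonneg_left (key s a) (hπ_nonneg s a)
    _ = β * M := by rw [← Finset.sum_mul, hπ_sum, one_mul]
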